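/- arXiv:2106.10436 — 2 statements merged into one kernel-verified Lean document; each statement's English description precedes it below -/
import Mathlib

section
/- If u, v ∈ L²(0,1) vanish at the boundary points 0 and 1 and are sufficiently regular (e.g. u, v in the fractional Sobolev space H^α with zero boundary values), then the two-sided fractional operator satisfies the duality (adjoint) relation ( L_θ^α u , v )_{L²(0,1)} = ( u , L_{1-θ}^α v )_{L²(0,1)}. -/
open Real MeasureTheory intervalIntegral

section FracAux
open Set Filter

def reflx (g : ℝ → ℝ) : ℝ → ℝ := fun t => g (1 - t)

noncomputable def Afr (β : ℝ) (f : ℝ → ℝ) (x : ℝ) : ℝ := ∫ s in (0:ℝ)..x, f s * (x - s) ^ β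

lemma II_ker {β : ℝ} (hβ : -1 < β) (y a b : ℝ) :
    IntervalIntegrable (fun s => (y - s) ^ β) volume a b := by
  have := (intervalIntegrable_rpow' (a := y - a) (b := y - b) hβ).comp_sub_left y
  simpa using this

lemma II_ker' {β : ℝ} (hβ : -1 < β) (y a b : ℝ) :
    IntervalIntegrable (fun s => (s - y) ^ β) volume a b := by
  have := (intervalIntegrable_rpow' (a := a - y) (b := b - y) hβ).comp_sub_right y
  simpa using this

lemma psi_continuous {β : ℝ} (hβ : -1 < β) {h : ℝ → ℝ} (hh : Continuous h) :
    Continuous fun x => ∫ τ in (0:ℝ)..1, h (x * τ) * (1 - τ) ^ β := by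
  rw [continuous_iff_continuousAt]
  intro x₀
  obtain ⟨M, hM⟩ := (isCompact_Icc (a := -(|x₀|+1)) (b := |x₀|+1)).exists_bound_of_continuousOn
    hh.continuousOn
  refine continuousAt_of_dominated_interval (bound := fun τ => M * (1 - τ) ^ β)
    ?_ ?_ ?_ ?_
  · filter_upwards with x
    exact ((hh.comp (continuous_const.mul continuous_id)).measurable.mul
      ((measurable_const.sub measurable_id).pow_const β)).aestronglyMeasurable
  · filter_upwards [Metric.ball_mem_nhds x₀ one_pos] with x hx
    filter_upwards with τ hτ
    rw [Set.uIoc_of_le (zero_le_one' ℝ)] at hτ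
    have h1 : 0 ≤ 1 - τ := by linarith [hτ.2]
    have hxa : |x| ≤ |x₀| + 1 := by
      have := mem_ball_iff_norm.mp hx
      rw [Real.norm_eq_abs] at this
      calc |x| ≤ |x - x₀| + |x₀| := by simpa using abs_add_le (x - x₀) x₀
      _ ≤ |x₀| + 1 := by linarith
    have hxb : |x * τ| ≤ |x₀| + 1 := by
      rw [abs_mul]
      calc |x| * |τ| ≤ (|x₀|+1) * 1 := by
            apply mul_le_mul hxa _ (abs_nonneg _) (by positivity)
            rw [abs_le]; constructor <;> linarith [hτ.1, hτ.2]
      _ = |x₀| + 1 := mul_one _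
    have hmem : x * τ ∈ Icc (-(|x₀|+1)) (|x₀|+1) := by
      rw [mem_Icc]
      constructor
      · linarith [neg_abs_le (x*τ)]
      · linarith [le_abs_self (x*τ)]
    have hMh : |h (x * τ)| ≤ M := by simpa using hM _ hmem
    calc ‖h (x * τ) * (1 - τ) ^ β‖ = |h (x*τ)| * |(1-τ)^β| := abs_mul _ _
      _ ≤ M * (1 - τ) ^ β := by
          apply mul_le_mul hMh (le_of_eq (abs_of_nonneg (rpow_nonneg h1 β)))
            (abs_nonneg _) ((abs_nonneg (h (x*τ))).trans hMh)
  · exact (II_ker hβ 1 0 1).const_mul M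
  · filter_upwards with τ _
    exact ((hh.comp (continuous_id.mul continuous_const)).mul continuous_const).continuousAt

lemma E1 {β : ℝ} (hβ : -1 < β) (r y : ℝ) :
    ∫ s in r..y, (y - s) ^ β = (y - r) ^ (β+1) / (β+1) := by
  have := integral_comp_sub_left (a := r) (b := y) (fun t => t ^ β) y
  rw [sub_self] at this
  rw [this, integral_rpow (Or.inl hβ), Real.zero_rpow (by linarith : β + 1 ≠ 0), sub_zero]

lemma E2 {β : ℝ} (hβ : -1 < β) (s y : ℝ) :
    ∫ z in s..y, (z - s) ^ β = (y - s) ^ (β+1) / (β+1) := by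
  have := integral_comp_sub_right (a := s) (b := y) (fun t => t ^ β) s
  rw [sub_self] at this
  rw [this, integral_rpow (Or.inl hβ), Real.zero_rpow (by linarith : β + 1 ≠ 0), sub_zero]

lemma oneD {β : ℝ} (hβ : -1 < β) (x : ℝ) :
    IntegrableOn (fun s => |s - x| ^ β) (Ioc (x-1) (x+1)) volume := by
  have h1 : IntegrableOn (fun s => (x - s) ^ β) (Ioc (x-1) x) volume :=
    (intervalIntegrable_iff_integrableOn_Ioc_of_le (by linarith)).mp (II_ker hβ x (x-1) x)
  have h2 : IntegrableOn (fun s => (s - x) ^ β) (Ioc x (x+1)) volume :=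
    (intervalIntegrable_iff_integrableOn_Ioc_of_le (by linarith)).mp (II_ker' hβ x x (x+1))
  have e1 : IntegrableOn (fun s => |s - x| ^ β) (Ioc (x-1) x) volume := by
    apply h1.congr_fun _ measurableSet_Ioc
    intro s hs
    simp only
    rw [abs_of_nonpos (by linarith [hs.2] : s - x ≤ 0), neg_sub]
  have e2 : IntegrableOn (fun s => |s - x| ^ β) (Ioc x (x+1)) volume := by
    apply h2.congr_fun _ measurableSet_Ioc
    intro s hs
    simp only
    rw [abs_of_pos (by linarith [hs.1] : 0 < s - x)]
  have := e1.union e2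
  rwa [Set.Ioc_union_Ioc_eq_Ioc (by linarith) (by linarith)] at this

lemma boundK {β : ℝ} (hβ : -1 < β) {x y : ℝ} (hx : x ∈ Ioc (0:ℝ) y) (hy1 : y ≤ 1) :
    ∫ s in Ioc (0:ℝ) y, |s - x| ^ β ≤ 2 / (β+1) := by
  have hsub : Ioc (0:ℝ) y ⊆ Ioc (x-1) (x+1) := by
    intro s hs
    exact ⟨by linarith [hs.1, hx.2], by linarith [hs.2, hx.1]⟩
  have mono := setIntegral_mono_set (oneD hβ x)
    (Filter.Eventually.of_forall (fun s => Real.rpow_nonneg (abs_nonneg _) β))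
    (HasSubset.Subset.eventuallyLE hsub)
  refine mono.trans ?_
  have hsplit : Ioc (x-1) (x+1) = Ioc (x-1) x ∪ Ioc x (x+1) :=
    (Set.Ioc_union_Ioc_eq_Ioc (by linarith) (by linarith)).symm
  have e1 : ∫ s in Ioc (x-1) x, |s - x| ^ β = 1/(β+1) := by
    rw [setIntegral_congr_fun measurableSet_Ioc
      (fun s hs => by simp only; rw [abs_of_nonpos (by linarith [hs.2] : s - x ≤ 0), neg_sub] :
        EqOn (fun s => |s - x| ^ β) (fun s => (x - s) ^ β) (Ioc (x-1) x)),
      ← intervalIntegral.integral_of_le (by linarith : x - 1 ≤ x), E1 hβ]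
    norm_num
  have e2 : ∫ s in Ioc x (x+1), |s - x| ^ β = 1/(β+1) := by
    rw [setIntegral_congr_fun measurableSet_Ioc
      (fun s hs => by simp only; rw [abs_of_pos (by linarith [hs.1] : 0 < s - x)] :
        EqOn (fun s => |s - x| ^ β) (fun s => (s - x) ^ β) (Ioc x (x+1))),
      ← intervalIntegral.integral_of_le (by linarith : x ≤ x + 1), E2 hβ]
    norm_num
  rw [hsplit, setIntegral_union (Set.Ioc_disjoint_Ioc_of_le le_rfl) measurableSet_Ioc
    ((oneD hβ x).mono_set (by rw [hsplit]; exact subset_union_left))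
    ((oneD hβ x).mono_set (by rw [hsplit]; exact subset_union_right)), e1, e2]
  rw [← add_div]
  norm_num

lemma prodKernel {β : ℝ} (hβ : -1 < β) {y : ℝ} (hy0 : 0 < y) (hy1 : y ≤ 1) :
    Integrable (fun p : ℝ × ℝ => |p.2 - p.1| ^ β)
      ((volume.restrict (Ioc (0:ℝ) y)).prod (volume.restrict (Ioc (0:ℝ) y))) := by
  have hmeas : AEStronglyMeasurable (fun p : ℝ × ℝ => |p.2 - p.1| ^ β)
      ((volume.restrict (Ioc (0:ℝ) y)).prod (volume.restrict (Ioc (0:ℝ) y))) :=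
    (((measurable_snd.sub measurable_fst).abs).pow_const β).aestronglyMeasurable
  rw [integrable_prod_iff hmeas]
  constructor
  · filter_upwards [ae_restrict_mem measurableSet_Ioc] with x hx
    have hsub : Ioc (0:ℝ) y ⊆ Ioc (x-1) (x+1) := fun s hs =>
      ⟨by linarith [hs.1, hx.2], by linarith [hs.2, hx.1]⟩
    exact ((oneD hβ x).mono_set hsub)
  · apply Integrable.mono' (integrable_const (2/(β+1)))
    · exact hmeas.norm.integral_prod_right'
    · filter_upwards [ae_restrict_mem measurableSet_Ioc] with x hx
      have hnn : ∀ s : ℝ, 0 ≤ |s - x| ^ β := fun s => Real.rpow_nonneg (abs_nonneg _) β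
      have : (∫ s in Ioc (0:ℝ) y, ‖|s - x| ^ β‖) = ∫ s in Ioc (0:ℝ) y, |s - x| ^ β := by
        congr 1; funext s; rw [Real.norm_eq_abs, abs_of_nonneg (hnn s)]
      rw [Real.norm_eq_abs]
      rw [abs_of_nonneg (integral_nonneg (fun s => norm_nonneg _))]
      rw [this]
      exact boundK hβ hx hy1

lemma swapTri {y : ℝ} (hy0 : 0 < y) (G : ℝ → ℝ → ℝ)
    (HG : Integrable (fun p : ℝ × ℝ => G p.1 p.2)
      ((volume.restrict (Ioc (0:ℝ) y)).prod (volume.restrict (Ioc (0:ℝ) y)))) :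
    ∫ x in (0:ℝ)..y, (∫ s in (0:ℝ)..x, G s x) = ∫ s in (0:ℝ)..y, (∫ x in s..y, G s x) := by
  set μ := volume.restrict (Ioc (0:ℝ) y) with hμ
  set H : ℝ → ℝ → ℝ := fun x s => Set.indicator (Ioc 0 x) (fun s => G s x) s with hH
  have step1 : ∫ x in (0:ℝ)..y, (∫ s in (0:ℝ)..x, G s x) = ∫ x, (∫ s, H x s ∂μ) ∂μ := by
    rw [intervalIntegral.integral_of_le hy0.le]
    apply setIntegral_congr_fun measurableSet_Ioc
    intro x hx
    simp only
    rw [intervalIntegral.integral_of_le hx.1.le]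
    rw [hH]
    simp only
    rw [setIntegral_indicator measurableSet_Ioc]
    congr 1
    rw [Set.Ioc_inter_Ioc]
    simp [min_eq_right hx.2, max_eq_left (le_refl (0:ℝ))]
  have hswapInt : Integrable (Function.uncurry H) (μ.prod μ) := by
    have hT : MeasurableSet {p : ℝ × ℝ | 0 < p.2 ∧ p.2 ≤ p.1} :=
      (measurableSet_lt measurable_const measurable_snd).inter
        (measurableSet_le measurable_snd measurable_fst)
    have : Function.uncurry H =
        Set.indicator {p : ℝ × ℝ | 0 < p.2 ∧ p.2 ≤ p.1} (fun p => G p.2 p.1) := by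
      funext p
      simp only [Function.uncurry, hH, Set.indicator, mem_Ioc, mem_setOf_eq]
    rw [this]
    exact (HG.swap).indicator hT
  have step2 : ∫ x, (∫ s, H x s ∂μ) ∂μ = ∫ s, (∫ x, H x s ∂μ) ∂μ :=
    integral_integral_swap hswapInt
  have step3 : ∫ s, (∫ x, H x s ∂μ) ∂μ = ∫ s in (0:ℝ)..y, (∫ x in s..y, G s x) := by
    rw [intervalIntegral.integral_of_le hy0.le]
    apply setIntegral_congr_fun measurableSet_Ioc
    intro s hs
    simp only
    have h1 : (fun x => H x s) = Set.indicator (Ici s) (fun x => G s x) := by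
      funext x
      simp only [hH, Set.indicator, mem_Ioc, mem_Ici]
      by_cases hc : s ≤ x
      · simp [hc, hs.1]
      · simp [hc]
    rw [h1, hμ, setIntegral_indicator measurableSet_Ici]
    have h2 : Ioc (0:ℝ) y ∩ Ici s = Icc s y := by
      ext t; simp only [mem_inter_iff, mem_Ioc, mem_Ici, mem_Icc]
      constructor
      · rintro ⟨⟨_, h2⟩, h3⟩; exact ⟨h3, h2⟩
      · rintro ⟨h3, h2⟩; exact ⟨⟨lt_of_lt_of_le hs.1 h3, h2⟩, h3⟩
    rw [h2, integral_Icc_eq_integral_Ioc, intervalIntegral.integral_of_le hs.2]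
  rw [step1, step2, step3]
lemma bdd_of_cont {f : ℝ → ℝ} (hf : Continuous f) :
    ∃ M : ℝ, 0 ≤ M ∧ ∀ z ∈ Icc (0:ℝ) 1, |f z| ≤ M := by
  obtain ⟨M, hM⟩ := (isCompact_Icc (a := (0:ℝ)) (b := 1)).exists_bound_of_continuousOn
    hf.continuousOn
  exact ⟨M, le_trans (abs_nonneg _) (by simpa using hM 0 (by norm_num)),
    fun z hz => by simpa using hM z hz⟩

lemma intG {β : ℝ} (hβ : -1 < β) {f g : ℝ → ℝ} (hf : Continuous f) (hg : Continuous g)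
    {y : ℝ} (hy0 : 0 < y) (hy1 : y ≤ 1) :
    Integrable (fun p : ℝ × ℝ => f p.1 * (g p.2 * (p.2 - p.1) ^ β))
      ((volume.restrict (Ioc (0:ℝ) y)).prod (volume.restrict (Ioc (0:ℝ) y))) := by
  obtain ⟨Mf, hMf0, hMf⟩ := bdd_of_cont hf
  obtain ⟨Mg, hMg0, hMg⟩ := bdd_of_cont hg
  apply Integrable.mono' (((prodKernel hβ hy0 hy1).const_mul (Mf * Mg)))
  · exact ((hf.measurable.comp measurable_fst).mul
      ((hg.measurable.comp measurable_snd).mul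
        ((measurable_snd.sub measurable_fst).pow_const β))).aestronglyMeasurable
  · rw [Measure.prod_restrict]
    filter_upwards [ae_restrict_mem (measurableSet_Ioc.prod measurableSet_Ioc)] with p hp
    obtain ⟨hp1, hp2⟩ := hp
    have hs1 : p.1 ∈ Icc (0:ℝ) 1 := ⟨hp1.1.le, hp1.2.trans hy1⟩
    have hs2 : p.2 ∈ Icc (0:ℝ) 1 := ⟨hp2.1.le, hp2.2.trans hy1⟩
    have h3 : |(p.2 - p.1) ^ β| ≤ |p.2 - p.1| ^ β := Real.abs_rpow_le_abs_rpow _ _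
    calc ‖f p.1 * (g p.2 * (p.2 - p.1) ^ β)‖
        = |f p.1| * (|g p.2| * |(p.2 - p.1) ^ β|) := by rw [Real.norm_eq_abs, abs_mul, abs_mul]
      _ ≤ Mf * (Mg * |p.2 - p.1| ^ β) := by
          gcongr
          exacts [hMf _ hs1, hMg _ hs2]
      _ = Mf * Mg * |p.2 - p.1| ^ β := by ring
  
lemma intG2 {β : ℝ} (hβ : -1 < β) {f : ℝ → ℝ} (hf : Continuous f)
    {y : ℝ} (hy0 : 0 < y) :
    Integrable (fun p : ℝ × ℝ => f p.1 * (y - p.2) ^ β)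
      ((volume.restrict (Ioc (0:ℝ) y)).prod (volume.restrict (Ioc (0:ℝ) y))) :=
  Integrable.mul_prod (hf.integrableOn_Ioc)
    ((intervalIntegrable_iff_integrableOn_Ioc_of_le hy0.le).mp (II_ker hβ y 0 y))

lemma Afr_eq_scaled {β : ℝ} (hβ : -1 < β) {h : ℝ → ℝ} {x : ℝ} (hx : 0 ≤ x) :
    Afr β h x = x ^ (β+1) * ∫ τ in (0:ℝ)..1, h (x * τ) * (1 - τ) ^ β := by
  rcases eq_or_lt_of_le hx with rfl | hx
  · simp [Afr, Real.zero_rpow (by linarith : β + 1 ≠ 0)]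
  · have hc : x ≠ 0 := ne_of_gt hx
    have key := integral_comp_mul_left (a := (0:ℝ)) (b := 1)
      (fun s => h s * (x - s) ^ β) hc
    rw [mul_zero, mul_one] at key
    have h0 : Afr β h x = x * ∫ τ in (0:ℝ)..1, h (x * τ) * (x - x * τ) ^ β := by
      rw [Afr, key, smul_eq_mul, ← mul_assoc, mul_inv_cancel₀ hc, one_mul]
    rw [h0]
    have h2 : ∀ τ ∈ Set.uIcc (0:ℝ) 1,
        h (x * τ) * (x - x * τ) ^ β = x ^ β * (h (x * τ) * (1 - τ) ^ β) := by
      intro τ hτ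
      rw [Set.uIcc_of_le (zero_le_one' ℝ), mem_Icc] at hτ
      have hxx : x - x * τ = x * (1 - τ) := by ring
      rw [hxx, Real.mul_rpow hx.le (by linarith [hτ.2])]
      ring
    rw [intervalIntegral.integral_congr h2, intervalIntegral.integral_const_mul,
      ← mul_assoc]
    rw [show x * x ^ β = x ^ (β + 1) by rw [Real.rpow_add_one hc]; ring]

lemma Afr_contOn {β : ℝ} (hβ : -1 < β) {h : ℝ → ℝ} (hh : Continuous h) :
    ContinuousOn (Afr β h) (Icc (0:ℝ) 1) := by
  have hχ : Continuous fun x : ℝ => x ^ (β+1) * ∫ τ in (0:ℝ)..1, h (x * τ) * (1 - τ) ^ β :=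
    (Real.continuous_rpow_const (by linarith)).mul (psi_continuous hβ hh)
  exact hχ.continuousOn.congr fun x hx => Afr_eq_scaled hβ hx.1

lemma Afr_contAt {β : ℝ} (hβ : -1 < β) {h : ℝ → ℝ} (hh : Continuous h) {x : ℝ} (hx : 0 < x) :
    ContinuousAt (Afr β h) x := by
  have hχ : Continuous fun x : ℝ => x ^ (β+1) * ∫ τ in (0:ℝ)..1, h (x * τ) * (1 - τ) ^ β :=
    (Real.continuous_rpow_const (by linarith)).mul (psi_continuous hβ hh)
  apply hχ.continuousAt.congr
  filter_upwards [Ioi_mem_nhds hx] with z hz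
  exact (Afr_eq_scaled hβ (le_of_lt hz)).symm

lemma Afr_II {β : ℝ} (hβ : -1 < β) {h : ℝ → ℝ} (hh : Continuous h)
    {a b : ℝ} (ha : a ∈ Icc (0:ℝ) 1) (hb : b ∈ Icc (0:ℝ) 1) :
    IntervalIntegrable (Afr β h) volume a b :=
  ((Afr_contOn hβ hh).mono (Set.uIcc_subset_Icc ha hb)).intervalIntegrable

lemma swap_mul {β : ℝ} (hβ : -1 < β) {f g : ℝ → ℝ} (hf : Continuous f) (hg : Continuous g)
    {y : ℝ} (hy0 : 0 < y) (hy1 : y ≤ 1) :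
    ∫ x in (0:ℝ)..y, (Afr β f x) * g x
      = ∫ s in (0:ℝ)..y, f s * ∫ x in s..y, g x * (x - s) ^ β := by
  have main := swapTri hy0 (fun s x => f s * (g x * (x - s) ^ β)) (intG hβ hf hg hy0 hy1)
  have l : ∀ x : ℝ, (∫ s in (0:ℝ)..x, f s * (g x * (x - s) ^ β)) = Afr β f x * g x := by
    intro x
    rw [show (fun s => f s * (g x * (x - s) ^ β)) = fun s => (f s * (x - s) ^ β) * g x by
      funext s; ring]
    rw [intervalIntegral.integral_mul_const]
    rfl
  have r : ∀ s : ℝ, (∫ x in s..y, f s * (g x * (x - s) ^ β))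
      = f s * ∫ x in s..y, g x * (x - s) ^ β := by
    intro s; rw [intervalIntegral.integral_const_mul]
  calc ∫ x in (0:ℝ)..y, (Afr β f x) * g x
      = ∫ x in (0:ℝ)..y, (∫ s in (0:ℝ)..x, f s * (g x * (x - s) ^ β)) := by
        apply intervalIntegral.integral_congr; intro x _; exact (l x).symm
    _ = ∫ s in (0:ℝ)..y, (∫ x in s..y, f s * (g x * (x - s) ^ β)) := main
    _ = ∫ s in (0:ℝ)..y, f s * ∫ x in s..y, g x * (x - s) ^ β := by
        apply intervalIntegral.integral_congr; intro s _; exact r s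

lemma swap2 {β : ℝ} (hβ : -1 < β) {f : ℝ → ℝ} (hf : Continuous f)
    {y : ℝ} (hy0 : 0 < y) (hy1 : y ≤ 1) :
    ∫ s in (0:ℝ)..y, (∫ r in (0:ℝ)..s, f r) * (y - s) ^ β
      = ∫ r in (0:ℝ)..y, f r * ((y - r) ^ (β+1) / (β+1)) := by
  have main := swapTri hy0 (fun r s => f r * (y - s) ^ β) (intG2 hβ hf hy0)
  calc ∫ s in (0:ℝ)..y, (∫ r in (0:ℝ)..s, f r) * (y - s) ^ β
      = ∫ s in (0:ℝ)..y, (∫ r in (0:ℝ)..s, f r * (y - s) ^ β) := by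
        apply intervalIntegral.integral_congr; intro s _
        simp only
        rw [intervalIntegral.integral_mul_const]
    _ = ∫ r in (0:ℝ)..y, (∫ s in r..y, f r * (y - s) ^ β) := main
    _ = ∫ r in (0:ℝ)..y, f r * ((y - r) ^ (β+1) / (β+1)) := by
        apply intervalIntegral.integral_congr; intro r _
        simp only
        rw [intervalIntegral.integral_const_mul, E1 hβ]

-- smoothness helpers
lemma sm_deriv {g : ℝ → ℝ} (hg : ContDiff ℝ (⊤ : ℕ∞) g) : ContDiff ℝ (⊤ : ℕ∞) (deriv g) := by
  have h : ContDiff ℝ (((⊤ : ℕ∞) : WithTop ℕ∞) + 1) g := by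
    rwa [show (((⊤ : ℕ∞) : WithTop ℕ∞) + 1) = ((⊤ : ℕ∞) : WithTop ℕ∞) from rfl]
  exact (contDiff_succ_iff_deriv.mp h).2.2

lemma repA {β : ℝ} (hβ : -1 < β) {g : ℝ → ℝ} (hg : ContDiff ℝ (⊤ : ℕ∞) g)
    {y : ℝ} (hy0 : 0 ≤ y) (hy1 : y ≤ 1) :
    Afr β g y = ∫ z in (0:ℝ)..y, (Afr β (deriv g) z + g 0 * z ^ β) := by
  have hg' : Continuous (deriv g) := (sm_deriv hg).continuous
  rcases eq_or_lt_of_le hy0 with rfl | hy0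
  · simp [Afr]
  -- rewrite g via FTC
  have hftc : ∀ s : ℝ, g s = g 0 + ∫ r in (0:ℝ)..s, deriv g r := by
    intro s
    have := intervalIntegral.integral_deriv_eq_sub
      (f := g) (a := 0) (b := s)
      (fun x _ => (hg.differentiable (by simp)).differentiableAt)
      (hg'.intervalIntegrable 0 s)
    linarith [this]
  have lhs1 : Afr β g y
      = ∫ s in (0:ℝ)..y, (g 0 * (y - s) ^ β + (∫ r in (0:ℝ)..s, deriv g r) * (y - s) ^ β) := by
    rw [Afr]
    apply intervalIntegral.integral_congr
    intro s _
    simp only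
    rw [hftc s]; ring
  have II1 : IntervalIntegrable (fun s => g 0 * (y - s) ^ β) volume 0 y :=
    (II_ker hβ y 0 y).const_mul _
  have hprim : Continuous fun s => ∫ r in (0:ℝ)..s, deriv g r :=
    intervalIntegral.continuous_primitive (fun a b => hg'.intervalIntegrable a b) 0
  have II2 : IntervalIntegrable (fun s => (∫ r in (0:ℝ)..s, deriv g r) * (y - s) ^ β) volume 0 y :=
    (II_ker hβ y 0 y).continuousOn_mul hprim.continuousOn
  rw [lhs1, intervalIntegral.integral_add II1 II2]
  rw [intervalIntegral.integral_const_mul, E1 hβ, swap2 hβ hg' hy0 hy1]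
  -- now the RHS
  have hAII : IntervalIntegrable (Afr β (deriv g)) volume 0 y :=
    Afr_II hβ hg' (by constructor <;> norm_num) ⟨hy0.le, hy1⟩
  have hrw : IntervalIntegrable (fun z : ℝ => g 0 * z ^ β) volume 0 y :=
    (intervalIntegrable_rpow' hβ).const_mul _
  rw [intervalIntegral.integral_add hAII hrw, intervalIntegral.integral_const_mul,
    integral_rpow (Or.inl hβ)]
  have hswA : ∫ z in (0:ℝ)..y, Afr β (deriv g) z
      = ∫ r in (0:ℝ)..y, deriv g r * ((y - r) ^ (β+1) / (β+1)) := by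
    have h1 := swap_mul hβ hg' continuous_const (y := y) hy0 hy1 (g := fun _ => (1:ℝ))
    have h2 : ∫ x in (0:ℝ)..y, (Afr β (deriv g) x) * (1:ℝ) = ∫ z in (0:ℝ)..y, Afr β (deriv g) z := by
      apply intervalIntegral.integral_congr; intro z _; simp
    rw [← h2, h1]
    apply intervalIntegral.integral_congr; intro s _
    simp only
    congr 1
    have h3 : ∫ x in s..y, (1:ℝ) * (x - s) ^ β = ∫ x in s..y, (x - s) ^ β := by
      apply intervalIntegral.integral_congr; intro z _; simp
    rw [h3, E2 hβ]
  rw [hswA]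
  rw [Real.zero_rpow (by linarith : β + 1 ≠ 0), sub_zero, add_comm]
  norm_num

lemma hasDerivAt_Afr {β : ℝ} (hβ : -1 < β) {g : ℝ → ℝ} (hg : ContDiff ℝ (⊤ : ℕ∞) g)
    {x : ℝ} (hx : x ∈ Ioo (0:ℝ) 1) :
    HasDerivAt (Afr β g) (Afr β (deriv g) x + g 0 * x ^ β) x := by
  have hg' : Continuous (deriv g) := (sm_deriv hg).continuous
  set φ : ℝ → ℝ := fun z => Afr β (deriv g) z + g 0 * z ^ β with hφ
  have hφcont : ContinuousOn φ (Ioo (0:ℝ) 1) := by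
    intro z hz
    exact (((Afr_contAt hβ hg' hz.1).add
      (continuousAt_const.mul ((Real.continuousAt_rpow_const z β (Or.inl hz.1.ne'))))).continuousWithinAt)
  have hint : IntervalIntegrable φ volume 0 x :=
    (Afr_II hβ hg' (by constructor <;> norm_num) ⟨hx.1.le, hx.2.le⟩).add
      ((intervalIntegrable_rpow' hβ).const_mul _)
  have hmeas : StronglyMeasurableAtFilter φ (nhds x) :=
    ContinuousOn.stronglyMeasurableAtFilter isOpen_Ioo hφcont x hx
  have hcont : ContinuousAt φ x :=
    (Afr_contAt hβ hg' hx.1).add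
      (continuousAt_const.mul (Real.continuousAt_rpow_const x β (Or.inl hx.1.ne')))
  have hFTC : HasDerivAt (fun y => ∫ z in (0:ℝ)..y, φ z) (φ x) x :=
    intervalIntegral.integral_hasDerivAt_right hint hmeas hcont
  apply hFTC.congr_of_eventuallyEq
  filter_upwards [Ioo_mem_nhds hx.1 hx.2] with z hz
  exact repA hβ hg hz.1.le hz.2.le

lemma deriv2_Afr {β : ℝ} (hβ : -1 < β) {g : ℝ → ℝ} (hg : ContDiff ℝ (⊤ : ℕ∞) g) (hg0 : g 0 = 0)
    {x : ℝ} (hx : x ∈ Ioo (0:ℝ) 1) :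
    deriv (deriv (Afr β g)) x
      = Afr β (deriv (deriv g)) x + deriv g 0 * x ^ β := by
  have hev : deriv (Afr β g) =ᶠ[nhds x] Afr β (deriv g) := by
    filter_upwards [Ioo_mem_nhds hx.1 hx.2] with z hz
    have := (hasDerivAt_Afr hβ hg hz).deriv
    rw [this, hg0]; simp
  rw [hev.deriv_eq]
  exact (hasDerivAt_Afr hβ (sm_deriv hg) hx).deriv

/-- interval integrability of `(Afr h + c₀ x^β) * w` on `[0,1]`. -/
lemma II_S {β : ℝ} (hβ : -1 < β) {h w : ℝ → ℝ} (hh : Continuous h) (c0 : ℝ)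
    (hw : Continuous w) :
    IntervalIntegrable (fun x => (Afr β h x + c0 * x ^ β) * w x) volume 0 1 := by
  have key : (fun x => (Afr β h x + c0 * x ^ β) * w x)
      = fun x => Afr β h x * w x + c0 * x ^ β * w x := by funext x; ring
  rw [key]
  have h1 : IntervalIntegrable (fun x => Afr β h x * w x) volume 0 1 := by
    apply ContinuousOn.intervalIntegrable
    rw [Set.uIcc_of_le (zero_le_one' ℝ)]
    exact (Afr_contOn hβ hh).mul hw.continuousOn
  have h2 : IntervalIntegrable (fun x => c0 * x ^ β * w x) volume 0 1 :=
    ((intervalIntegrable_rpow' hβ).const_mul c0).mul_continuousOn hw.continuousOn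
  exact h1.add h2

/-- by parts -/
lemma BP {β : ℝ} (hβ : -1 < β) {g w : ℝ → ℝ} (hg : ContDiff ℝ (⊤ : ℕ∞) g) (hw : ContDiff ℝ (⊤ : ℕ∞) w)
    (hw0 : w 0 = 0) (hw1 : w 1 = 0) :
    ∫ x in (0:ℝ)..1, (Afr β (deriv g) x + g 0 * x ^ β) * w x
      = -∫ x in (0:ℝ)..1, Afr β g x * deriv w x := by
  have hg' : Continuous (deriv g) := (sm_deriv hg).continuous
  have hw' : Continuous (deriv w) := (sm_deriv hw).continuous
  set D : ℝ → ℝ := fun x =>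
    (Afr β (deriv g) x + g 0 * x ^ β) * w x + Afr β g x * deriv w x with hD
  have hPcont : ContinuousOn (fun x => Afr β g x * w x) (Icc (0:ℝ) 1) :=
    (Afr_contOn hβ hg.continuous).mul hw.continuous.continuousOn
  have hPderiv : ∀ x ∈ Ioo (0:ℝ) 1,
      HasDerivWithinAt (fun x => Afr β g x * w x) (D x) (Ioi x) x := by
    intro x hx
    exact (((hasDerivAt_Afr hβ hg hx).mul
      ((hw.differentiable (by simp)).differentiableAt.hasDerivAt))).hasDerivWithinAt
  have hDint : IntervalIntegrable D volume 0 1 := by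
    apply (II_S hβ hg' (g 0) hw.continuous).add
    apply ContinuousOn.intervalIntegrable
    rw [Set.uIcc_of_le (zero_le_one' ℝ)]
    exact (Afr_contOn hβ hg.continuous).mul hw'.continuousOn
  have hftc := intervalIntegral.integral_eq_sub_of_hasDeriv_right_of_le
    (zero_le_one' ℝ) hPcont hPderiv hDint
  have hz : ∫ x in (0:ℝ)..1, D x = 0 := by
    rw [hftc, hw0, hw1]; ring
  have hsplit := intervalIntegral.integral_add (II_S hβ hg' (g 0) hw.continuous)
    (by
      apply ContinuousOn.intervalIntegrable
      rw [Set.uIcc_of_le (zero_le_one' ℝ)]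
      exact (Afr_contOn hβ hg.continuous).mul hw'.continuousOn :
      IntervalIntegrable (fun x => Afr β g x * deriv w x) volume 0 1)
  rw [hD] at hz
  rw [hsplit] at hz
  linarith [hz]

lemma reflx_contDiff {g : ℝ → ℝ} (hg : ContDiff ℝ (⊤ : ℕ∞) g) : ContDiff ℝ (⊤ : ℕ∞) (reflx g) :=
  hg.comp (contDiff_const.sub contDiff_id)

lemma reflx_reflx (g : ℝ → ℝ) : reflx (reflx g) = g := by
  funext t; simp [reflx]

lemma deriv_reflx {g : ℝ → ℝ} (hg : ContDiff ℝ (⊤ : ℕ∞) g) (t : ℝ) :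
    deriv (reflx g) t = -deriv g (1 - t) := by
  have hinner : HasDerivAt (fun s : ℝ => 1 - s) (-1) t := by
    simpa using (hasDerivAt_id t).const_sub 1
  have houter : HasDerivAt g (deriv g (1 - t)) (1 - t) :=
    ((hg.differentiable (by simp)).differentiableAt).hasDerivAt
  have := (houter.comp t hinner).deriv
  show deriv (fun x => g (1 - x)) t = _
  simpa [reflx, Function.comp_def] using this

lemma reflx_deriv {g : ℝ → ℝ} (hg : ContDiff ℝ (⊤ : ℕ∞) g) :
    reflx (deriv g) = fun t => -(deriv (reflx g) t) := by
  funext t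
  rw [deriv_reflx hg]
  simp [reflx]

lemma Afr_neg (β : ℝ) (h : ℝ → ℝ) : Afr β (fun t => -(h t)) = fun x => -(Afr β h x) := by
  funext x
  simp [Afr, neg_mul, intervalIntegral.integral_neg]

/-- reflection identity for the right-sided kernel integral -/
lemma right_eq_reflx (β : ℝ) (g : ℝ → ℝ) (y : ℝ) :
    (∫ s in y..1, g s * (s - y) ^ β) = Afr β (reflx g) (1 - y) := by
  have key := integral_comp_sub_left (a := (0:ℝ)) (b := 1 - y)
    (fun s => g s * (s - y) ^ β) 1
  simp only [sub_zero, sub_sub_cancel] at key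
  rw [Afr]
  rw [← key]
  apply intervalIntegral.integral_congr
  intro t _
  simp only [reflx]
  congr 2
  ring

/-- the core symmetric Fubini identity -/
lemma CF {β : ℝ} (hβ : -1 < β) {f g : ℝ → ℝ} (hf : Continuous f) (hg : Continuous g) :
    ∫ x in (0:ℝ)..1, Afr β f x * g x = ∫ x in (0:ℝ)..1, Afr β (reflx g) x * reflx f x := by
  rw [swap_mul hβ hf hg one_pos le_rfl]
  have h1 : ∀ s : ℝ, (∫ x in s..1, g x * (x - s) ^ β) = Afr β (reflx g) (1 - s) :=
    fun s => right_eq_reflx β g s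
  have h2 : ∫ s in (0:ℝ)..1, f s * ∫ x in s..1, g x * (x - s) ^ β
      = ∫ s in (0:ℝ)..1, f s * Afr β (reflx g) (1 - s) := by
    apply intervalIntegral.integral_congr
    intro s _
    simp only
    rw [h1 s]
  rw [h2]
  have key := integral_comp_sub_left (a := (0:ℝ)) (b := 1)
    (fun s => f s * Afr β (reflx g) (1 - s)) 1
  simp only [sub_zero, sub_self] at key
  rw [← key]
  apply intervalIntegral.integral_congr
  intro t _
  simp only [reflx, sub_sub_cancel]
  ring

/-- the key adjointness identity -/
lemma KEY {β : ℝ} (hβ : -1 < β) {a b : ℝ → ℝ} (ha : ContDiff ℝ (⊤ : ℕ∞) a) (hb : ContDiff ℝ (⊤ : ℕ∞) b)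
    (ha0 : a 0 = 0) (ha1 : a 1 = 0) (hb0 : b 0 = 0) (hb1 : b 1 = 0) :
    ∫ x in (0:ℝ)..1, (Afr β (deriv (deriv a)) x + deriv a 0 * x ^ β) * b x
      = ∫ x in (0:ℝ)..1,
          (Afr β (deriv (deriv (reflx b))) x + deriv (reflx b) 0 * x ^ β) * reflx a x := by
  rw [BP hβ (sm_deriv ha) hb hb0 hb1]
  rw [BP hβ (sm_deriv (reflx_contDiff hb)) (reflx_contDiff ha)
    (by simp [reflx, ha1]) (by simp [reflx, ha0])]
  congr 1
  have hda : Continuous (deriv a) := (sm_deriv ha).continuous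
  have hdb : Continuous (deriv b) := (sm_deriv hb).continuous
  rw [CF hβ hda hdb]
  apply intervalIntegral.integral_congr
  intro x _
  simp only
  rw [reflx_deriv hb, reflx_deriv ha, Afr_neg]
  simp only [neg_mul, mul_neg, neg_neg]

lemma deriv2_right {β : ℝ} (hβ : -1 < β) {g : ℝ → ℝ} (hg : ContDiff ℝ (⊤ : ℕ∞) g) (hg1 : g 1 = 0)
    {x : ℝ} (hx : x ∈ Ioo (0:ℝ) 1) :
    deriv (deriv (fun y => Afr β (reflx g) (1 - y))) x
      = Afr β (deriv (deriv (reflx g))) (1 - x) + deriv (reflx g) 0 * (1 - x) ^ β := by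
  have hrg := reflx_contDiff hg
  have h0 : reflx g 0 = 0 := by simp [reflx, hg1]
  have h1 : ∀ y ∈ Ioo (0:ℝ) 1, HasDerivAt (fun y => Afr β (reflx g) (1 - y))
      (-(Afr β (deriv (reflx g)) (1 - y))) y := by
    intro y hy
    have hmem : 1 - y ∈ Ioo (0:ℝ) 1 := ⟨by linarith [hy.2], by linarith [hy.1]⟩
    have houter := hasDerivAt_Afr hβ hrg hmem
    have hinner : HasDerivAt (fun s : ℝ => 1 - s) (-1) y := by
      simpa using (hasDerivAt_id y).const_sub 1
    have hcomp := houter.comp y hinner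
    rw [h0] at hcomp
    simpa [Function.comp_def] using hcomp
  have hev : deriv (fun y => Afr β (reflx g) (1 - y))
      =ᶠ[nhds x] fun y => -(Afr β (deriv (reflx g)) (1 - y)) := by
    filter_upwards [Ioo_mem_nhds hx.1 hx.2] with z hz
    exact (h1 z hz).deriv
  rw [hev.deriv_eq]
  have hmem : 1 - x ∈ Ioo (0:ℝ) 1 := ⟨by linarith [hx.2], by linarith [hx.1]⟩
  have houter2 := hasDerivAt_Afr hβ (sm_deriv hrg) hmem
  have hinner2 : HasDerivAt (fun s : ℝ => 1 - s) (-1) x := by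
    simpa using (hasDerivAt_id x).const_sub 1
  have hcomp2 : HasDerivAt (fun y => -Afr β (deriv (reflx g)) (1 - y))
      (Afr β (deriv (deriv (reflx g))) (1 - x) + deriv (reflx g) 0 * (1 - x) ^ β) x := by
    have h' := (houter2.comp x hinner2).neg
    have e : (fun y : ℝ => -(Afr β (deriv (reflx g)) ∘ HSub.hSub 1) y)
        = fun y => -Afr β (deriv (reflx g)) (1 - y) := by
      funext y; simp [Function.comp]
    have h' : HasDerivAt (fun y => -Afr β (deriv (reflx g)) (1 - y)) _ x := h'
    convert h' using 1
    ring
  exact hcomp2.deriv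
end FracAux

/-- Left Riemann–Liouville fractional derivative of order `α ∈ (1,2)` on `(0,1)`. -/
noncomputable def leftRL (α : ℝ) (u : ℝ → ℝ) (x : ℝ) : ℝ :=
  (1 / Real.Gamma (2 - α)) *
    deriv (deriv (fun y : ℝ => ∫ s in (0:ℝ)..y, u s * (y - s) ^ (1 - α))) x

/-- Right Riemann–Liouville fractional derivative of order `α ∈ (1,2)` on `(0,1)`. -/
noncomputable def rightRL (α : ℝ) (u : ℝ → ℝ) (x : ℝ) : ℝ :=
  (1 / Real.Gamma (2 - α)) *
    deriv (deriv (fun y : ℝ => ∫ s in y..(1:ℝ), u s * (s - y) ^ (1 - α))) x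

/-- Two-sided fractional operator `L_θ^α = -[θ ₀D_x^α + (1-θ) ₓD_1^α]`. -/
noncomputable def Lop (θ α : ℝ) (u : ℝ → ℝ) (x : ℝ) : ℝ :=
  -(θ * leftRL α u x + (1 - θ) * rightRL α u x)

section FracMain
open Set Filter

/-- Duality (adjoint) relation `(L_θ^α u, v) = (u, L_{1-θ}^α v)` in `L²(0,1)` for
sufficiently regular `u, v` vanishing at the boundary. -/
theorem Lop_adjoint (α θ : ℝ) (hα : α ∈ Set.Ioo (1:ℝ) 2) (hθ : θ ∈ Set.Icc (0:ℝ) 1)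
    (u v : ℝ → ℝ)
    (hu : ContDiff ℝ (⊤ : ℕ∞) u) (hv : ContDiff ℝ (⊤ : ℕ∞) v)
    (huL2 : MemLp u 2 (volume.restrict (Set.Ioo (0:ℝ) 1)))
    (hvL2 : MemLp v 2 (volume.restrict (Set.Ioo (0:ℝ) 1)))
    (hu0 : u 0 = 0) (hu1 : u 1 = 0) (hv0 : v 0 = 0) (hv1 : v 1 = 0) :
    ∫ x in (0:ℝ)..1, Lop θ α u x * v x = ∫ x in (0:ℝ)..1, u x * Lop (1 - θ) α v x := by
  set β : ℝ := 1 - α with hβdef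
  have hβ : -1 < β := by simp only [hβdef]; linarith [hα.2]
  set c : ℝ := 1 / Real.Gamma (2 - α) with hc
  -- second-derivative formulas
  have hLeft : ∀ (w : ℝ → ℝ), ContDiff ℝ (⊤ : ℕ∞) w → w 0 = 0 → ∀ x ∈ Ioo (0:ℝ) 1,
      leftRL α w x = c * (Afr β (deriv (deriv w)) x + deriv w 0 * x ^ β) := by
    intro w hw hw0 x hx
    have e : (fun y : ℝ => ∫ s in (0:ℝ)..y, w s * (y - s) ^ (1 - α)) = Afr β w := rfl
    rw [leftRL, e, deriv2_Afr hβ hw hw0 hx]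
  have hRight : ∀ (w : ℝ → ℝ), ContDiff ℝ (⊤ : ℕ∞) w → w 1 = 0 → ∀ x ∈ Ioo (0:ℝ) 1,
      rightRL α w x = c * (Afr β (deriv (deriv (reflx w))) (1-x)
        + deriv (reflx w) 0 * (1-x) ^ β) := by
    intro w hw hw1 x hx
    have e : (fun y : ℝ => ∫ s in y..(1:ℝ), w s * (s - y) ^ (1 - α))
        = fun y => Afr β (reflx w) (1 - y) := by
      funext y; exact right_eq_reflx β w y
    rw [rightRL, e, deriv2_right hβ hw hw1 hx]
  -- abbreviations
  set Su : ℝ → ℝ := fun x => Afr β (deriv (deriv u)) x + deriv u 0 * x ^ β with hSu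
  set Tu : ℝ → ℝ := fun x => Afr β (deriv (deriv (reflx u))) x + deriv (reflx u) 0 * x ^ β with hTu
  set Sv : ℝ → ℝ := fun x => Afr β (deriv (deriv v)) x + deriv v 0 * x ^ β with hSv
  set Tv : ℝ → ℝ := fun x => Afr β (deriv (deriv (reflx v))) x + deriv (reflx v) 0 * x ^ β with hTv
  have hu'' : Continuous (deriv (deriv u)) := (sm_deriv (sm_deriv hu)).continuous
  have hv'' : Continuous (deriv (deriv v)) := (sm_deriv (sm_deriv hv)).continuous
  have hru'' : Continuous (deriv (deriv (reflx u))) :=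
    (sm_deriv (sm_deriv (reflx_contDiff hu))).continuous
  have hrv'' : Continuous (deriv (deriv (reflx v))) :=
    (sm_deriv (sm_deriv (reflx_contDiff hv))).continuous
  -- interval integrability
  have II1 : IntervalIntegrable (fun x => Su x * v x) volume 0 1 := II_S hβ hu'' _ hv.continuous
  have II2 : IntervalIntegrable (fun x => Tu x * reflx v x) volume 0 1 :=
    II_S hβ hru'' _ (reflx_contDiff hv).continuous
  have II3 : IntervalIntegrable (fun x => Sv x * u x) volume 0 1 := II_S hβ hv'' _ hu.continuous
  have II4 : IntervalIntegrable (fun x => Tv x * reflx u x) volume 0 1 :=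
    II_S hβ hrv'' _ (reflx_contDiff hu).continuous
  have II2' : IntervalIntegrable (fun x => Tu (1-x) * v x) volume 0 1 := by
    have e : (fun x => Tu (1-x) * v x) = fun x => (fun y => Tu y * reflx v y) (1 - x) := by
      funext x; simp [reflx, sub_sub_cancel]
    rw [e]
    have h' := (II2.comp_sub_left 1).symm
    simpa using h'
  have II4' : IntervalIntegrable (fun x => Tv (1-x) * u x) volume 0 1 := by
    have e : (fun x => Tv (1-x) * u x) = fun x => (fun y => Tv y * reflx u y) (1 - x) := by
      funext x; simp [reflx, sub_sub_cancel]
    rw [e]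
    have h' := (II4.comp_sub_left 1).symm
    simpa using h'
  -- comp-sub integral identities
  have IC2 : ∫ x in (0:ℝ)..1, Tu (1-x) * v x = ∫ x in (0:ℝ)..1, Tu x * reflx v x := by
    have key := integral_comp_sub_left (a := (0:ℝ)) (b := 1) (fun y => Tu y * reflx v y) 1
    simp only [sub_zero, sub_self] at key
    rw [← key]
    apply intervalIntegral.integral_congr
    intro x _
    simp [reflx, sub_sub_cancel]
  have IC4 : ∫ x in (0:ℝ)..1, Tv (1-x) * u x = ∫ x in (0:ℝ)..1, Tv x * reflx u x := by
    have key := integral_comp_sub_left (a := (0:ℝ)) (b := 1) (fun y => Tv y * reflx u y) 1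
    simp only [sub_zero, sub_self] at key
    rw [← key]
    apply intervalIntegral.integral_congr
    intro x _
    simp [reflx, sub_sub_cancel]
  -- a.e. rewriting of both sides
  have hae1 : ∀ᵐ x ∂(volume : Measure ℝ), x ≠ 1 := by
    have hs : {a : ℝ | ¬ a ≠ 1} = {1} := by ext a; simp
    rw [ae_iff, hs]
    exact measure_singleton 1
  have hLHS : ∫ x in (0:ℝ)..1, Lop θ α u x * v x
      = ∫ x in (0:ℝ)..1, ((-(θ*c)) * (Su x * v x) + (-((1-θ)*c)) * (Tu (1-x) * v x)) := by
    apply intervalIntegral.integral_congr_ae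
    filter_upwards [hae1] with x hx1 hx
    rw [Set.uIoc_of_le (zero_le_one' ℝ)] at hx
    have hxo : x ∈ Ioo (0:ℝ) 1 := ⟨hx.1, lt_of_le_of_ne hx.2 hx1⟩
    rw [Lop, hLeft u hu hu0 x hxo, hRight u hu hu1 x hxo]
    ring
  have hRHS : ∫ x in (0:ℝ)..1, u x * Lop (1-θ) α v x
      = ∫ x in (0:ℝ)..1, ((-((1-θ)*c)) * (Sv x * u x) + (-(θ*c)) * (Tv (1-x) * u x)) := by
    apply intervalIntegral.integral_congr_ae
    filter_upwards [hae1] with x hx1 hx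
    rw [Set.uIoc_of_le (zero_le_one' ℝ)] at hx
    have hxo : x ∈ Ioo (0:ℝ) 1 := ⟨hx.1, lt_of_le_of_ne hx.2 hx1⟩
    rw [Lop, hLeft v hv hv0 x hxo, hRight v hv hv1 x hxo]
    ring
  rw [hLHS, hRHS]
  rw [intervalIntegral.integral_add (II1.const_mul _) (II2'.const_mul _),
    intervalIntegral.integral_add ((II3.const_mul _)) (II4'.const_mul _),
    intervalIntegral.integral_const_mul, intervalIntegral.integral_const_mul,
    intervalIntegral.integral_const_mul, intervalIntegral.integral_const_mul,
    IC2, IC4]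
  -- the two key identities
  have hC1 : ∫ x in (0:ℝ)..1, Su x * v x = ∫ x in (0:ℝ)..1, Tv x * reflx u x :=
    KEY hβ hu hv hu0 hu1 hv0 hv1
  have hC2 : ∫ x in (0:ℝ)..1, Tu x * reflx v x = ∫ x in (0:ℝ)..1, Sv x * u x := by
    have := KEY hβ (reflx_contDiff hu) (reflx_contDiff hv)
      (by simp [reflx, hu1]) (by simp [reflx, hu0])
      (by simp [reflx, hv1]) (by simp [reflx, hv0])
    rw [reflx_reflx v, reflx_reflx u] at this
    exact this
  rw [hC1, hC2]
  ring

end FracMain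
end

section
/- A function v belongs to the two-sided weighted Sobolev space H^s_{ω^{γ,β}}(0,1) if and only if v ∈ H^s_{(β)}(J) and the reflected function v̂(x) := v(1-x) belongs to H^s_{(γ)}(J), where J = (0, 3/4). (Integer s version.) -/
open MeasureTheory Finset

/-- The interval `J = (0, 3/4)`. -/
def Jset : Set ℝ := Set.Ioo 0 (3 / 4)

/-- Membership in the one-sided weighted Sobolev space `H^s_{(η)}(J)` (integer order). -/
def memHJ (s : ℕ) (η : ℝ) (v : ℝ → ℝ) : Prop :=
  ∀ k ≤ s, IntegrableOn (fun x => x ^ (η + k) * (iteratedDeriv k v x) ^ 2) Jset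

/-- Membership in the two-sided weighted Sobolev space `H^s_{ω^{γ,β}}(0,1)`
(integer order): `D^k v ∈ L²_{ω^{γ+k,β+k}}(0,1)` for `0 ≤ k ≤ s`. -/
def memHw (s : ℕ) (γ β : ℝ) (v : ℝ → ℝ) : Prop :=
  ∀ k ≤ s, IntegrableOn
    (fun x => (1 - x) ^ (γ + k) * x ^ (β + k) * (iteratedDeriv k v x) ^ 2)
    (Set.Ioo (0:ℝ) 1)

/-- Iterated derivative of a reflected function. -/
lemma iteratedDeriv_comp_const_sub' (n : ℕ) (f : ℝ → ℝ) (c x : ℝ) :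
    iteratedDeriv n (fun y => f (c - y)) x = (-1) ^ n * iteratedDeriv n f (c - x) := by
  set g : ℝ → ℝ := fun z => f (c + z) with hg
  have h : (fun y : ℝ => f (c - y)) = fun y => g (-y) := by
    funext y; rw [hg]; simp [sub_eq_add_neg]
  rw [h, iteratedDeriv_comp_neg, hg, iteratedDeriv_comp_const_add, smul_eq_mul, sub_eq_add_neg]

lemma refl_measurePreserving : MeasurePreserving (fun x : ℝ => 1 - x) volume volume := by
  have h : (fun x : ℝ => 1 - x) = (fun x : ℝ => x + 1) ∘ Neg.neg := by
    funext x; simp [sub_eq_add_neg, add_comm]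
  rw [h]
  exact (measurePreserving_add_right volume 1).comp (Measure.measurePreserving_neg volume)

lemma refl_embedding : MeasurableEmbedding (fun x : ℝ => 1 - x) :=
  (continuous_const.sub continuous_id).measurableEmbedding
    (fun a b h => by dsimp at h; linarith)

/-- Integrability is preserved by multiplying with a measurable weight bounded on the set. -/
lemma integrableOn_weight_mul {s : Set ℝ} (hs : MeasurableSet s) {g w : ℝ → ℝ}
    (hg : IntegrableOn g s) (hw : Measurable w) {C : ℝ} (hb : ∀ x ∈ s, |w x| ≤ C) :
    IntegrableOn (fun x => w x * g x) s := by
  refine Integrable.mono' (hg.norm.const_mul C)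
    (hw.aestronglyMeasurable.restrict.mul hg.aestronglyMeasurable) ?_
  rw [ae_restrict_iff' hs]
  filter_upwards with x hx
  simp only [norm_mul, Real.norm_eq_abs]
  exact mul_le_mul_of_nonneg_right (hb x hx) (abs_nonneg _)

lemma min_rpow_le {l u b a : ℝ} (hl : 0 < l) (h1 : l ≤ b) (h2 : b ≤ u) :
    min (l ^ a) (u ^ a) ≤ b ^ a := by
  rcases le_or_gt 0 a with ha | ha
  · exact le_trans (min_le_left _ _) (Real.rpow_le_rpow hl.le h1 ha)
  · exact le_trans (min_le_right _ _) (Real.rpow_le_rpow_of_nonpos (hl.trans_le h1) h2 ha.le)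

lemma rpow_le_max {l u b a : ℝ} (hl : 0 < l) (h1 : l ≤ b) (h2 : b ≤ u) :
    b ^ a ≤ max (l ^ a) (u ^ a) := by
  rcases le_or_gt 0 a with ha | ha
  · exact le_trans (Real.rpow_le_rpow (hl.trans_le h1).le h2 ha) (le_max_right _ _)
  · exact le_trans (Real.rpow_le_rpow_of_nonpos hl h1 ha.le) (le_max_left _ _)

/-- `v ∈ H^s_{ω^{γ,β}}(0,1)` iff `v ∈ H^s_{(β)}(J)` and `v̂(x) = v(1-x) ∈ H^s_{(γ)}(J)`. -/
theorem memHw_iff_memHJ (s : ℕ) (γ β : ℝ) (hγ : -1 < γ) (hβ : -1 < β) (v : ℝ → ℝ) :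
    memHw s γ β v ↔ memHJ s β v ∧ memHJ s γ (fun x => v (1 - x)) := by
  have hJ : MeasurableSet Jset := measurableSet_Ioo
  constructor
  · intro h
    constructor
    · -- v ∈ H^s_{(β)}(J)
      intro k hk
      have hG : IntegrableOn
          (fun x => (1 - x) ^ (γ + k) * x ^ (β + k) * (iteratedDeriv k v x) ^ 2) Jset :=
        (h k hk).mono_set (fun x hx => ⟨hx.1, by simpa using hx.2.trans_le (by norm_num)⟩)
      have hw : Measurable (fun x : ℝ => (((1 - x) ^ (γ + k) : ℝ))⁻¹) := by fun_prop
      set C : ℝ := (min ((4⁻¹ : ℝ) ^ (γ + k)) ((1 : ℝ) ^ (γ + k)))⁻¹ with hC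
      have hmin : 0 < min ((4⁻¹ : ℝ) ^ (γ + k)) ((1 : ℝ) ^ (γ + k)) :=
        lt_min (Real.rpow_pos_of_pos (by norm_num) _) (Real.rpow_pos_of_pos one_pos _)
      have key := integrableOn_weight_mul hJ hG hw (C := C) (fun x hx => by
        have hx1 : (4⁻¹ : ℝ) ≤ 1 - x := by have := hx.2; simp only [Jset, Set.mem_Ioo] at hx; linarith [hx.2]
        have hx2 : (1 : ℝ) - x ≤ 1 := by simp only [Jset, Set.mem_Ioo] at hx; linarith [hx.1]
        have hpos : (0:ℝ) < (1 - x) ^ (γ + k) := Real.rpow_pos_of_pos (by linarith) _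
        rw [abs_of_pos (inv_pos.mpr hpos), hC]
        exact inv_anti₀ hmin (min_rpow_le (by norm_num) hx1 hx2))
      refine key.congr_fun (fun x hx => ?_) hJ
      simp only [Jset, Set.mem_Ioo] at hx
      have hpos : (0:ℝ) < (1 - x) ^ (γ + k) := Real.rpow_pos_of_pos (by linarith [hx.2]) _
      field_simp
    · -- v̂ ∈ H^s_{(γ)}(J)
      intro k hk
      have heq : (fun x : ℝ => x ^ (γ + k) * (iteratedDeriv k (fun y => v (1 - y)) x) ^ 2)
          = fun x => x ^ (γ + k) * (iteratedDeriv k v (1 - x)) ^ 2 := by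
        funext x
        rw [iteratedDeriv_comp_const_sub', mul_pow, ← pow_mul, mul_comm k 2, pow_mul]
        norm_num
      rw [heq]
      -- change of variables
      have hpre : (fun x : ℝ => 1 - x) ⁻¹' (Set.Ioo (4⁻¹ : ℝ) 1) = Jset := by
        ext x
        simp only [Set.mem_preimage, Set.mem_Ioo, Jset]
        constructor <;> intro ⟨h1, h2⟩ <;> constructor <;> linarith
      have hG : IntegrableOn
          (fun x => (1 - x) ^ (γ + k) * x ^ (β + k) * (iteratedDeriv k v x) ^ 2)
          (Set.Ioo (4⁻¹ : ℝ) 1) :=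
        (h k hk).mono_set (fun x hx => ⟨by have := hx.1; linarith [hx.1], hx.2⟩)
      have hw : Measurable (fun x : ℝ => ((x ^ (β + k) : ℝ))⁻¹) := by fun_prop
      set C : ℝ := (min ((4⁻¹ : ℝ) ^ (β + k)) ((1 : ℝ) ^ (β + k)))⁻¹ with hC
      have hmin : 0 < min ((4⁻¹ : ℝ) ^ (β + k)) ((1 : ℝ) ^ (β + k)) :=
        lt_min (Real.rpow_pos_of_pos (by norm_num) _) (Real.rpow_pos_of_pos one_pos _)
      have key := integrableOn_weight_mul measurableSet_Ioo hG hw (C := C) (fun x hx => by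
        have hpos : (0:ℝ) < x ^ (β + k) := Real.rpow_pos_of_pos (by linarith [hx.1]) _
        rw [abs_of_pos (inv_pos.mpr hpos), hC]
        exact inv_anti₀ hmin (min_rpow_le (by norm_num) hx.1.le hx.2.le))
      have key2 : IntegrableOn (fun x => (1 - x) ^ (γ + k) * (iteratedDeriv k v x) ^ 2)
          (Set.Ioo (4⁻¹ : ℝ) 1) := by
        refine key.congr_fun (fun x hx => ?_) measurableSet_Ioo
        have hpos : (0:ℝ) < x ^ (β + k) := Real.rpow_pos_of_pos (by linarith [hx.1]) _
        field_simp
      have := (refl_measurePreserving.integrableOn_comp_preimage refl_embedding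
        (f := fun x => (1 - x) ^ (γ + k) * (iteratedDeriv k v x) ^ 2)
        (s := Set.Ioo (4⁻¹ : ℝ) 1)).mpr key2
      rw [hpre] at this
      refine this.congr_fun (fun x hx => ?_) hJ
      simp [Function.comp, sub_sub_cancel]
  · rintro ⟨h1, h2⟩ k hk
    have hsub : Set.Ioo (0:ℝ) 1 ⊆ Jset ∪ Set.Ico (3/4 : ℝ) 1 := by
      intro x hx
      rcases lt_or_ge x (3/4 : ℝ) with hc | hc
      · exact Or.inl ⟨hx.1, hc⟩
      · exact Or.inr ⟨hc, hx.2⟩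
    refine IntegrableOn.mono_set (IntegrableOn.union ?_ ?_) hsub
    · -- on Jset
      have hw : Measurable (fun x : ℝ => ((1 - x) ^ (γ + k) : ℝ)) := by fun_prop
      set C : ℝ := max ((4⁻¹ : ℝ) ^ (γ + k)) ((1 : ℝ) ^ (γ + k)) with hC
      have key := integrableOn_weight_mul hJ (h1 k hk) hw (C := C) (fun x hx => by
        simp only [Jset, Set.mem_Ioo] at hx
        have hx1 : (4⁻¹ : ℝ) ≤ 1 - x := by linarith [hx.2]
        have hx2 : (1 : ℝ) - x ≤ 1 := by linarith [hx.1]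
        have hpos : (0:ℝ) < (1 - x) ^ (γ + k) := Real.rpow_pos_of_pos (by linarith) _
        rw [abs_of_pos hpos, hC]
        exact rpow_le_max (by norm_num) hx1 hx2)
      exact key.congr_fun (fun x hx => by ring) hJ
    · -- on Ico (3/4) 1 via reflection
      have heq : (fun x : ℝ => x ^ (γ + k) * (iteratedDeriv k (fun y => v (1 - y)) x) ^ 2)
          = fun x => x ^ (γ + k) * (iteratedDeriv k v (1 - x)) ^ 2 := by
        funext x
        rw [iteratedDeriv_comp_const_sub', mul_pow, ← pow_mul, mul_comm k 2, pow_mul]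
        norm_num
      have h2' : IntegrableOn (fun x : ℝ => x ^ (γ + k) * (iteratedDeriv k v (1 - x)) ^ 2)
          (Set.Ioc (0:ℝ) (4⁻¹ : ℝ)) := by
        rw [← heq]
        exact (h2 k hk).mono_set (fun x hx => ⟨hx.1, lt_of_le_of_lt hx.2 (by norm_num)⟩)
      have hpre : (fun x : ℝ => 1 - x) ⁻¹' (Set.Ioc (0:ℝ) (4⁻¹ : ℝ)) = Set.Ico (3/4 : ℝ) 1 := by
        ext x
        simp only [Set.mem_preimage, Set.mem_Ioc, Set.mem_Ico]
        constructor <;> intro ⟨ha, hb⟩ <;> constructor <;> linarith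
      have hrefl := (refl_measurePreserving.integrableOn_comp_preimage refl_embedding
        (f := fun x : ℝ => x ^ (γ + k) * (iteratedDeriv k v (1 - x)) ^ 2)
        (s := Set.Ioc (0:ℝ) (4⁻¹ : ℝ))).mpr h2'
      rw [hpre] at hrefl
      have hrefl2 : IntegrableOn (fun x : ℝ => (1 - x) ^ (γ + k) * (iteratedDeriv k v x) ^ 2)
          (Set.Ico (3/4 : ℝ) 1) := by
        refine hrefl.congr_fun (fun x hx => ?_) measurableSet_Ico
        simp [Function.comp, sub_sub_cancel]
      have hw : Measurable (fun x : ℝ => (x ^ (β + k) : ℝ)) := by fun_prop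
      set C : ℝ := max ((3/4 : ℝ) ^ (β + k)) ((1 : ℝ) ^ (β + k)) with hC
      have key := integrableOn_weight_mul measurableSet_Ico hrefl2 hw (C := C) (fun x hx => by
        have hpos : (0:ℝ) < x ^ (β + k) := Real.rpow_pos_of_pos (by linarith [hx.1]) _
        rw [abs_of_pos hpos, hC]
        exact rpow_le_max (by norm_num) hx.1 hx.2.le)
      exact key.congr_fun (fun x hx => by ring) measurableSet_Ico
end
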